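/- arXiv:1803.03319 — 5 statements merged into one kernel-verified Lean document; each statement's English description precedes it below -/
import Mathlib

section
/- Let M ∈ {-1,+1}^{K×ℓ} be a coding matrix, L : ℝ → ℝ≥0 a loss function with L(0) > 0 satisfying L(z) + L(-z) ≥ 2·L(0) for all z (e.g., L convex), and ρ the minimum Hamming distance between distinct rows of M. For margins f : Fin ℓ → ℝ, if the loss-based decoder predicts k̂ = argmin_k Σ_j L(M_{k,j} f(j)) and k̂ ≠ y for the true label y, then Σ_j L(M_{y,j} f(j)) ≥ ρ·L(0). (Key step of the Allwein–Schapire–Singer bound.) -/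
open Finset

/-- key step of the Allwein–Schapire–Singer bound: if the loss-based
decoder prefers some row `k ≠ y` (its total loss is at most that of the true row `y`),
then the total loss of the true row is at least `ρ · L 0`, where `ρ` is a lower bound
on the Hamming distance between distinct rows of the ±1 matrix `M`, `L ≥ 0`,
`L 0 > 0`, and `L z + L (-z) ≥ 2 L 0` for all `z`. -/
theorem stmt7 (K ℓ : ℕ) (M : Fin K → Fin ℓ → ℝ) (f : Fin ℓ → ℝ)
    (L : ℝ → ℝ) (ρ : ℕ) (y : Fin K)
    (hM : ∀ k j, M k j = 1 ∨ M k j = -1)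
    (hLnn : ∀ z, 0 ≤ L z)
    (hL0 : 0 < L 0)
    (hLconv : ∀ z, 2 * L 0 ≤ L z + L (-z))
    (hρ : ∀ a b : Fin K, a ≠ b →
      ρ ≤ (univ.filter (fun j => M a j ≠ M b j)).card)
    (hmis : ∃ k : Fin K, k ≠ y ∧
      (∑ j, L (M k j * f j)) ≤ ∑ j, L (M y j * f j)) :
    (ρ : ℝ) * L 0 ≤ ∑ j, L (M y j * f j) := by
  obtain ⟨k, hky, hle⟩ := hmis
  set S := univ.filter (fun j => M k j ≠ M y j) with hS
  have hcard : ρ ≤ S.card := hρ k y hky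
  have key : (S.card : ℝ) * (2 * L 0) ≤ 2 * ∑ j, L (M y j * f j) := by
    calc (S.card : ℝ) * (2 * L 0) = ∑ _j ∈ S, 2 * L 0 := by
          rw [Finset.sum_const, nsmul_eq_mul]
      _ ≤ ∑ j ∈ S, (L (M y j * f j) + L (M k j * f j)) := by
          apply Finset.sum_le_sum
          intro j hj
          have hne : M k j ≠ M y j := (Finset.mem_filter.mp hj).2
          have hopp : M k j * f j = -(M y j * f j) := by
            rcases hM k j with h1 | h1 <;> rcases hM y j with h2 | h2 <;>
              simp [h1, h2] at hne ⊢ <;> ring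
          rw [hopp]
          exact hLconv _
      _ ≤ ∑ j, (L (M y j * f j) + L (M k j * f j)) := by
          apply Finset.sum_le_sum_of_subset_of_nonneg (Finset.filter_subset _ _)
          intro j _ _
          exact add_nonneg (hLnn _) (hLnn _)
      _ = (∑ j, L (M y j * f j)) + ∑ j, L (M k j * f j) := Finset.sum_add_distrib
      _ ≤ 2 * ∑ j, L (M y j * f j) := by linarith
  have h1 : (ρ : ℝ) * (2 * L 0) ≤ (S.card : ℝ) * (2 * L 0) := by
    apply mul_le_mul_of_nonneg_right (by exact_mod_cast hcard)
    positivity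
  nlinarith [hL0]
end

section
/- Let M ∈ {-1,+1}^{K×ℓ}, L : ℝ → ℝ≥0 with L(z)+L(-z) ≥ 2L(0) > 0 for all z, and ρ the minimum Hamming distance of M. Given m examples with labels y_i and margin vectors f_i : Fin ℓ → ℝ, the number of examples misclassified by loss-based decoding is at most (1/(ρ·L(0))) · Σ_{i=1}^{m} Σ_{j=1}^{ℓ} L(M_{y_i,j} f_i(j)). Equivalently, the multiclass training error is at most ℓ·ε/(ρ·L(0)) where ε is the average binary loss. -/
open Finset

/-- Allwein et al. bound (3): the number of training examples misclassified
by loss-based decoding is at most `(1/(ρ·L 0)) · ∑_i ∑_j L (M (y i) j * f i j)`;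
equivalently the multiclass training error is at most `ℓ·ε/(ρ·L 0)`. -/
theorem stmt8 (K ℓ m : ℕ) (M : Fin K → Fin ℓ → ℝ)
    (f : Fin m → Fin ℓ → ℝ) (y : Fin m → Fin K)
    (L : ℝ → ℝ) (ρ : ℕ)
    (hM : ∀ k j, M k j = 1 ∨ M k j = -1)
    (hLnn : ∀ z, 0 ≤ L z)
    (hL0 : 0 < L 0)
    (hLconv : ∀ z, 2 * L 0 ≤ L z + L (-z))
    (hρpos : 0 < ρ)
    (hρ : ∀ a b : Fin K, a ≠ b →
      ρ ≤ (univ.filter (fun j => M a j ≠ M b j)).card) :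
    ((univ.filter (fun i : Fin m => ∃ k : Fin K, k ≠ y i ∧
        (∑ j, L (M k j * f i j)) ≤ ∑ j, L (M (y i) j * f i j))).card : ℝ) ≤
      (1 / ((ρ : ℝ) * L 0)) * ∑ i, ∑ j, L (M (y i) j * f i j) := by
  set S := univ.filter (fun i : Fin m => ∃ k : Fin K, k ≠ y i ∧
      (∑ j, L (M k j * f i j)) ≤ ∑ j, L (M (y i) j * f i j)) with hS
  have hρL : (0:ℝ) < (ρ:ℝ) * L 0 := by positivity
  -- key: for i ∈ S, ρ * L 0 ≤ inner sum
  have key : ∀ i ∈ S, (ρ:ℝ) * L 0 ≤ ∑ j, L (M (y i) j * f i j) := by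
    intro i hi
    rw [hS, mem_filter] at hi
    obtain ⟨-, k, hk, hle⟩ := hi
    set D := univ.filter (fun j => M k j ≠ M (y i) j) with hD
    have h1 : (2:ℝ) * ((ρ:ℝ) * L 0) ≤
        (∑ j, L (M (y i) j * f i j)) + ∑ j, L (M k j * f i j) := by
      have hsum : ∀ j ∈ D, 2 * L 0 ≤ L (M (y i) j * f i j) + L (M k j * f i j) := by
        intro j hj
        rw [hD, mem_filter] at hj
        have hne := hj.2
        have hMk : M k j = -(M (y i) j) := by
          rcases hM k j with h | h <;> rcases hM (y i) j with h' | h' <;>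
            simp_all
        have : M k j * f i j = -(M (y i) j * f i j) := by rw [hMk]; ring
        rw [this]
        exact hLconv _
      calc (2:ℝ) * ((ρ:ℝ) * L 0) = (ρ:ℝ) * (2 * L 0) := by ring
        _ ≤ (D.card : ℝ) * (2 * L 0) := by
            have := hρ k (y i) hk
            have : (ρ:ℝ) ≤ (D.card : ℝ) := by exact_mod_cast this
            nlinarith [hL0]
        _ = ∑ _j ∈ D, 2 * L 0 := by rw [sum_const, nsmul_eq_mul]
        _ ≤ ∑ j ∈ D, (L (M (y i) j * f i j) + L (M k j * f i j)) :=
            sum_le_sum hsum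
        _ ≤ ∑ j, (L (M (y i) j * f i j) + L (M k j * f i j)) := by
            apply sum_le_sum_of_subset_of_nonneg (subset_univ _)
            intro j _ _
            have := hLnn (M (y i) j * f i j); have := hLnn (M k j * f i j)
            linarith
        _ = (∑ j, L (M (y i) j * f i j)) + ∑ j, L (M k j * f i j) := by
            rw [sum_add_distrib]
    linarith
  -- count
  have h2 : (S.card : ℝ) * ((ρ:ℝ) * L 0) ≤ ∑ i, ∑ j, L (M (y i) j * f i j) := by
    calc (S.card : ℝ) * ((ρ:ℝ) * L 0) = ∑ _i ∈ S, (ρ:ℝ) * L 0 := by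
          rw [sum_const, nsmul_eq_mul]
      _ ≤ ∑ i ∈ S, ∑ j, L (M (y i) j * f i j) := sum_le_sum key
      _ ≤ ∑ i, ∑ j, L (M (y i) j * f i j) := by
          apply sum_le_sum_of_subset_of_nonneg (subset_univ _)
          intro i _ _
          exact sum_nonneg fun j _ => hLnn _
  rw [div_mul_eq_mul_div, one_mul, le_div_iff₀ hρL]
  exact h2
end

section
/- Let M be the coding matrix whose rows are indicator vectors (in {-1,+1}) of edge sets of source-to-sink paths in the LTLS trellis graph with slice width 2 and n ≥ 2 internal slices (so K = 2^n paths, ℓ edges). Then the minimum Hamming distance between distinct rows of M is at most 4. -/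
open Finset

/-- Edges of the LTLS trellis graph with slice width 2 and `m+2` internal slices:
2 source edges, `(m+1)·2·2` internal edges, and 2 sink edges. -/
abbrev LTLSEdge (m : ℕ) := Fin 2 ⊕ (Fin (m + 1) × Fin 2 × Fin 2) ⊕ Fin 2

/-- The ±1 codeword of the path that visits vertex `c i` in internal slice `i`:
`+1` exactly on the edges used by the path. -/
def ltlsCode (m : ℕ) (c : Fin (m + 2) → Fin 2) : LTLSEdge m → ℝ
  | Sum.inl v => if c 0 = v then 1 else -1
  | Sum.inr (Sum.inl (i, u, w)) =>
      if c i.castSucc = u ∧ c i.succ = w then 1 else -1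
  | Sum.inr (Sum.inr v) => if c (Fin.last (m + 1)) = v then 1 else -1

/-- in the LTLS trellis with slice width 2 and `n = m+2 ≥ 2` internal
slices, there exist two distinct paths whose ±1 edge-indicator codewords have Hamming
distance at most 4; hence the minimum Hamming distance of the coding matrix is ≤ 4. -/
theorem stmt10 (m : ℕ) :
    ∃ c c' : Fin (m + 2) → Fin 2, c ≠ c' ∧
      (univ.filter (fun e : LTLSEdge m => ltlsCode m c e ≠ ltlsCode m c' e)).card ≤ 4 := by
  refine ⟨fun _ => 0, fun j => if (j : ℕ) = m + 1 then 1 else 0, ?_, ?_⟩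
  · intro h
    have := congrFun h (Fin.last (m + 1))
    simp [Fin.last] at this
  · have hsub : (univ.filter (fun e : LTLSEdge m =>
        ltlsCode m (fun _ => 0) e ≠
          ltlsCode m (fun j => if (j : ℕ) = m + 1 then 1 else 0) e)) ⊆
        {Sum.inr (Sum.inl (Fin.last m, 0, 0)), Sum.inr (Sum.inl (Fin.last m, 0, 1)),
         Sum.inr (Sum.inr 0), Sum.inr (Sum.inr 1)} := by
      intro e he
      simp only [mem_filter, mem_univ, true_and] at he
      match e with
      | Sum.inl v =>
          exfalso
          apply he
          have h0 : ((0 : Fin (m + 2)) : ℕ) ≠ m + 1 := by simp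
          simp [ltlsCode, h0]
      | Sum.inr (Sum.inl (i, u, w)) =>
          have hc : ((i.castSucc : Fin (m + 2)) : ℕ) ≠ m + 1 := by
            have := i.isLt; simp [Fin.castSucc]; omega
          by_cases hi : (i : ℕ) = m
          · have hilast : i = Fin.last m := by
              apply Fin.ext; simpa [Fin.last] using hi
            have hs : ((i.succ : Fin (m + 2)) : ℕ) = m + 1 := by
              simp [Fin.val_succ, hi]
            fin_cases u <;> fin_cases w <;>
              simp_all [ltlsCode, Fin.succ, mem_insert, mem_singleton]
          · exfalso
            apply he
            have hs : ((i.succ : Fin (m + 2)) : ℕ) ≠ m + 1 := by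
              simp [Fin.val_succ]; omega
            have h1 : (i : ℕ) ≠ m + 1 := by have := i.isLt; omega
            simp [ltlsCode, hc, hs, hi, h1]
      | Sum.inr (Sum.inr v) =>
          fin_cases v <;> simp [mem_insert, mem_singleton]
    calc _ ≤ _ := card_le_card hsub
    _ ≤ 4 := by
      apply le_trans (card_insert_le _ _)
      have := card_insert_le (Sum.inr (Sum.inl (Fin.last m, 0, 1)) : LTLSEdge m)
        {Sum.inr (Sum.inr 0), Sum.inr (Sum.inr 1)}
      have h2 := card_insert_le (Sum.inr (Sum.inr 0) : LTLSEdge m)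
        {Sum.inr (Sum.inr 1)}
      simp only [card_singleton] at *
      omega
end

section
/- Let the edge set {1,…,ℓ} be partitioned into slices, and suppose every valid codeword has exactly one +1 entry per slice. Define edge weights w(j) = L(f(j)) + Σ_{j' в same slice as j, j'≠j} L(-f(j')). Then for any two valid codewords M_a, M_b, w-weight of the path of a minus that of b equals the difference of their total losses: Σ_{j: M_{a,j}=1} w(j) - Σ_{j: M_{b,j}=1} w(j) = Σ_j L(M_{a,j}f(j)) - Σ_j L(M_{b,j}f(j)). Consequently, the minimum-weight path corresponds to the loss-based-decoding minimizer. -/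
open Finset

lemma stmt12_key {ℓ t : ℕ} (slice : Fin ℓ → Fin t)
    (M : Fin ℓ → ℝ) (f : Fin ℓ → ℝ) (L : ℝ → ℝ)
    (hM : ∀ j, M j = 1 ∨ M j = -1)
    (hone : ∀ s : Fin t, ∃! j : Fin ℓ, slice j = s ∧ M j = 1) :
    (∑ j ∈ univ.filter (fun j => M j = 1),
        (L (f j) + ∑ j' ∈ univ.filter (fun j' => slice j' = slice j ∧ j' ≠ j), L (-(f j')))) =
      ∑ j, L (M j * f j) := by
  rw [Finset.sum_add_distrib]
  have hrhs : ∑ j, L (M j * f j)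
      = (∑ j ∈ univ.filter (fun j => M j = 1), L (f j))
        + ∑ j ∈ univ.filter (fun j => ¬ M j = 1), L (-(f j)) := by
    rw [← Finset.sum_filter_add_sum_filter_not univ (fun j => M j = 1)]
    congr 1
    · apply Finset.sum_congr rfl
      intro j hj
      simp only [mem_filter] at hj
      rw [hj.2, one_mul]
    · apply Finset.sum_congr rfl
      intro j hj
      simp only [mem_filter] at hj
      rcases hM j with h | h
      · exact absurd h hj.2
      · rw [h]; ring_nf
  rw [hrhs]
  congr 1
  -- double sum equals sum over non-one entries
  have hcalc : (∑ j ∈ univ.filter (fun j => M j = 1),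
      ∑ j' ∈ univ.filter (fun j' => slice j' = slice j ∧ j' ≠ j), L (-(f j')))
      = ∑ j : Fin ℓ, ∑ j' : Fin ℓ,
          if M j = 1 ∧ slice j' = slice j ∧ j' ≠ j then L (-(f j')) else 0 := by
    rw [Finset.sum_filter]
    apply Finset.sum_congr rfl
    intro j _
    rw [Finset.sum_filter]
    by_cases h : M j = 1
    · simp [h]
    · simp [h]
  rw [hcalc, Finset.sum_comm]
  rw [Finset.sum_filter]
  apply Finset.sum_congr rfl
  intro j' _
  obtain ⟨j0, ⟨hj0s, hj0M⟩, huniq⟩ := hone (slice j')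
  by_cases h : M j' = 1
  · -- all terms zero: any j with M j = 1 and slice j = slice j' must equal j'
    simp only [h, not_true, if_false]
    apply Finset.sum_eq_zero
    intro j _
    rw [if_neg]
    rintro ⟨hM1, hs, hne⟩
    exact hne ((huniq j' ⟨rfl, h⟩) ▸ (huniq j ⟨hs.symm, hM1⟩) ▸ rfl)
  · simp only [h, not_false_iff, if_true]
    rw [Finset.sum_eq_single j0]
    · rw [if_pos ⟨hj0M, hj0s.symm, fun he => h (he ▸ hj0M)⟩]
    · intro j _ hne
      rw [if_neg]
      rintro ⟨hM1, hs, _⟩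
      exact hne (huniq j ⟨hs.symm, hM1⟩)
    · intro hmem; exact absurd (Finset.mem_univ j0) hmem

/-- with edges partitioned into slices and valid codewords having exactly
one `+1` per slice, define edge weights
`w j = L (f j) + ∑_{j' in same slice, j' ≠ j} L (-f j')`. Then for any two valid
codewords `Ma`, `Mb`, the difference of their path weights equals the difference of
their total losses. -/
theorem stmt12 (ℓ t : ℕ) (slice : Fin ℓ → Fin t)
    (Ma Mb : Fin ℓ → ℝ) (f : Fin ℓ → ℝ) (L : ℝ → ℝ)
    (hMa : ∀ j, Ma j = 1 ∨ Ma j = -1) (hMb : ∀ j, Mb j = 1 ∨ Mb j = -1)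
    (honea : ∀ s : Fin t, ∃! j : Fin ℓ, slice j = s ∧ Ma j = 1)
    (honeb : ∀ s : Fin t, ∃! j : Fin ℓ, slice j = s ∧ Mb j = 1) :
    (∑ j ∈ univ.filter (fun j => Ma j = 1),
        (L (f j) + ∑ j' ∈ univ.filter (fun j' => slice j' = slice j ∧ j' ≠ j), L (-(f j')))) -
    (∑ j ∈ univ.filter (fun j => Mb j = 1),
        (L (f j) + ∑ j' ∈ univ.filter (fun j' => slice j' = slice j ∧ j' ≠ j), L (-(f j')))) =
      (∑ j, L (Ma j * f j)) - (∑ j, L (Mb j * f j)) := by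
  rw [stmt12_key slice Ma f L hMa honea, stmt12_key slice Mb f L hMb honeb]
end

section
/- In the generalized trellis graph with arbitrary K, let P be a source-to-sink path with last edge e_q = (u_q, t). Define S(e_j) for an edge e_j = (u_j, v_j) as {(u,u') ∈ E : δ(u) = δ(u_j)} if v_j ≠ t, and {(u,u') ∈ E : δ(u) ≥ δ(u_j)} if v_j = t. Then for every edge e_j on P, no edge of S(e_j) \ {e_j} lies on P. -/
/-- `Reach adj k u v`: there is a directed walk of length `k` from `u` to `v`. -/
def Reach {V : Type*} (adj : V → V → Prop) : ℕ → V → V → Prop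
  | 0, u, v => u = v
  | (k + 1), u, v => ∃ w, adj u w ∧ Reach adj k w v

/-- `graphDist adj s v`: the length (in edges) of a shortest directed path from `s` to `v`. -/
noncomputable def graphDist {V : Type*} (adj : V → V → Prop) (s v : V) : ℕ :=
  sInf {k | Reach adj k s v}

/-!
Every walk from `s` to a non-sink vertex avoids the sink, so it climbs exactly one layer per
edge. Hence all walks from `s` to the vertex `p j` (`j < m`) of the path have length `j`, and
`δ (p j) = j`. Equal distances of tails thus identify path edges; and if the head of `e_j` is
the sink, `e_j` is the last edge, whose tail is the farthest one on the path.
-/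

namespace Reach

variable {V : Type*} {adj : V → V → Prop}

theorem snoc {k : ℕ} {u w v : V} (h : Reach adj k u w) (hwv : adj w v) :
    Reach adj (k + 1) u v := by
  induction k generalizing u with
  | zero => cases h; exact ⟨v, hwv, rfl⟩
  | succ n ih =>
    obtain ⟨x, hux, hxw⟩ := h
    exact ⟨x, hux, ih hxw⟩

theorem of_path {m : ℕ} {p : Fin (m + 1) → V} (hadj : ∀ i : Fin m, adj (p i.castSucc) (p i.succ))
    (j : Fin (m + 1)) : Reach adj j (p 0) (p j) := by
  induction j using Fin.induction with
  | zero => rfl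
  | succ i ih => exact ih.snoc (hadj i)

theorem level_eq {t : V} {level : V → ℕ}
    (hlev : ∀ u v, adj u v → v ≠ t → level v = level u + 1) (ht : ∀ v, ¬ adj t v)
    {k : ℕ} {u v : V} (h : Reach adj k u v) (hv : v ≠ t) : level v = level u + k := by
  induction k generalizing u with
  | zero => cases h; rfl
  | succ n ih =>
    obtain ⟨w, huw, hwv⟩ := h
    -- no edge leaves `t`, so `t` can only be the last vertex of a walk
    have hw : w ≠ t := by
      rintro rfl
      cases n with
      | zero => exact hv hwv.symm
      | succ n => obtain ⟨x, htx, _⟩ := hwv; exact ht x htx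
    rw [ih hwv, hlev u w huw hw]
    omega

end Reach

theorem graphDist_eq_of_reach {V : Type*} {adj : V → V → Prop} {t : V} {level : V → ℕ}
    (hlev : ∀ u v, adj u v → v ≠ t → level v = level u + 1) (ht : ∀ v, ¬ adj t v)
    {k : ℕ} {s v : V} (h : Reach adj k s v) (hv : v ≠ t) : graphDist adj s v = k := by
  have hmem : graphDist adj s v ∈ {k | Reach adj k s v} := Nat.sInf_mem ⟨k, h⟩
  have h₁ := Reach.level_eq hlev ht hmem hv
  have h₂ := Reach.level_eq hlev ht h hv
  omega

theorem stmt15_general {V : Type*} (adj : V → V → Prop) (s t : V)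
    (level : V → ℕ)
    (hlev : ∀ u v, adj u v → v ≠ t → level v = level u + 1)
    (ht : ∀ v, ¬ adj t v)
    (m : ℕ) (p : Fin (m + 1) → V)
    (hp0 : p 0 = s)
    (hadj : ∀ i : Fin m, adj (p i.castSucc) (p i.succ))
    (hmid : ∀ i : Fin (m + 1), i ≠ Fin.last m → p i ≠ t) :
    ∀ i i' : Fin m,
      ((p i.succ ≠ t ∧
          graphDist adj s (p i'.castSucc) = graphDist adj s (p i.castSucc)) ∨
       (p i.succ = t ∧
          graphDist adj s (p i.castSucc) ≤ graphDist adj s (p i'.castSucc))) →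
      (p i'.castSucc, p i'.succ) = (p i.castSucc, p i.succ) := by
  have hdist (j : Fin m) : graphDist adj s (p j.castSucc) = j := by
    subst hp0
    exact graphDist_eq_of_reach hlev ht (Reach.of_path hadj j.castSucc)
      (hmid _ (Fin.castSucc_lt_last j).ne)
  intro i i' h
  suffices i' = i by rw [this]
  rcases h with ⟨-, heq⟩ | ⟨hsink, hle⟩
  · rw [hdist, hdist] at heq
    exact Fin.ext heq
  · have hlast : i.succ = Fin.last m := by
      by_contra hne
      exact hmid i.succ hne hsink
    rw [hdist, hdist] at hle
    have hi : (i : ℕ) + 1 = m := congrArg Fin.val hlast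
    exact Fin.ext (by omega)

/-- Corollary "edges of slice": in the layered DAG, let `P` be an s-t
path. For edges `e_j = (p i, p (i+1))` and `e' = (p i', p (i'+1))` of `P`, if `e'` lies
in `S(e_j)` — i.e. `δ(tail e') = δ(tail e_j)` when the head of `e_j` is not the sink,
and `δ(tail e') ≥ δ(tail e_j)` when it is the sink — then `e' = e_j`. Hence no edge of
`S(e_j) \ {e_j}` lies on `P`. -/
theorem stmt15 {V : Type*} (adj : V → V → Prop) (s t : V)
    (level : V → ℕ) (hs : level s = 0)
    (hlev : ∀ u v, adj u v → v ≠ t → level v = level u + 1)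
    (ht : ∀ v, ¬ adj t v)
    (m : ℕ) (p : Fin (m + 1) → V)
    (hp0 : p 0 = s) (hpl : p (Fin.last m) = t)
    (hadj : ∀ i : Fin m, adj (p i.castSucc) (p i.succ))
    (hmid : ∀ i : Fin (m + 1), i ≠ Fin.last m → p i ≠ t) :
    ∀ i i' : Fin m,
      ((p i.succ ≠ t ∧
          graphDist adj s (p i'.castSucc) = graphDist adj s (p i.castSucc)) ∨
       (p i.succ = t ∧
          graphDist adj s (p i.castSucc) ≤ graphDist adj s (p i'.castSucc))) →
      (p i'.castSucc, p i'.succ) = (p i.castSucc, p i.succ) :=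
  stmt15_general adj s t level hlev ht m p hp0 hadj hmid
end
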